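/- arXiv:2004.01040 — 3 statements merged into one kernel-verified Lean document; each statement's English description precedes it below -/
import Mathlib

section
/- Let K be a field with char(K) ≠ 2 and a, b ∈ K nonzero. The quaternion algebra H_K(a,b) splits if and only if the conic a x² + b y² = z² has a nontrivial K-rational point. -/
/-!
Writing a quaternion as `α + β j` with `α, β ∈ K(√a)`, its reduced norm is `N(α) - b N(β)`.
If `H_K(a,b) ≅ M₂(K)`, a nonzero singular matrix gives a nonzero quaternion of norm zero, so
`b N(β) = N(α)` nontrivially and `b` is a norm from `K(√a)`. Conversely, if `b = u² - a v²`,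
the matrices `i = [0 1; a 0]` and `j = [u v; -av -u]` satisfy the quaternion relations, and the
resulting algebra map `H_K(a,b) → M₂(K)` is injective because `H_K(a,b)` is simple, hence an
isomorphism by dimension count. Finally, `b` is a norm from `K(√a)` exactly when the conic
`a x² + b y² = z²` has a nontrivial point.
-/

open Quaternion

section NormFromQuadraticExtension

variable {K : Type*} [Field K] {a : K}

theorem exists_sq_sub_mul_sq_eq_of_isSquare (h2 : (2 : K) ≠ 0) (ha : a ≠ 0) (hsq : IsSquare a)
    (b : K) : ∃ u v : K, u ^ 2 - a * v ^ 2 = b := by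
  obtain ⟨c, rfl⟩ := hsq
  have hc : c ≠ 0 := by rintro rfl; simp at ha
  exact ⟨(b + 1) / 2, (b - 1) / (2 * c), by field_simp; ring⟩

theorem eq_zero_and_eq_zero_of_sq_sub_mul_sq_eq_zero (ha : ¬IsSquare a) {s t : K}
    (h : s ^ 2 - a * t ^ 2 = 0) : s = 0 ∧ t = 0 := by
  have ht : t = 0 := by
    by_contra ht
    exact ha ⟨s / t, by field_simp; linear_combination -h⟩
  subst ht
  exact ⟨by simpa using h, rfl⟩

theorem exists_sq_sub_mul_sq_eq_of_eq_mul (h2 : (2 : K) ≠ 0) (ha : a ≠ 0) {b w x y z : K}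
    (h : w ^ 2 - a * x ^ 2 = b * (y ^ 2 - a * z ^ 2))
    (hne : ¬(w = 0 ∧ x = 0 ∧ y = 0 ∧ z = 0)) : ∃ u v : K, u ^ 2 - a * v ^ 2 = b := by
  by_cases hsq : IsSquare a
  · exact exists_sq_sub_mul_sq_eq_of_isSquare h2 ha hsq b
  have hM : y ^ 2 - a * z ^ 2 ≠ 0 := by
    intro hM
    obtain ⟨rfl, rfl⟩ := eq_zero_and_eq_zero_of_sq_sub_mul_sq_eq_zero hsq hM
    rw [hM, mul_zero] at h
    obtain ⟨rfl, rfl⟩ := eq_zero_and_eq_zero_of_sq_sub_mul_sq_eq_zero hsq h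
    exact hne ⟨rfl, rfl, rfl, rfl⟩
  -- `b = N(α) / N(β) = N(α β̄) / N(β)²` with `α = w + x√a`, `β = y + z√a`.
  refine ⟨(w * y - a * x * z) / (y ^ 2 - a * z ^ 2), (x * y - w * z) / (y ^ 2 - a * z ^ 2), ?_⟩
  field_simp
  linear_combination (y ^ 2 - a * z ^ 2) * h

theorem exists_conic_point_iff_exists_sq_sub_mul_sq_eq (h2 : (2 : K) ≠ 0) (ha : a ≠ 0)
    (b : K) :
    (∃ x y z : K, (x, y, z) ≠ (0, 0, 0) ∧ a * x ^ 2 + b * y ^ 2 = z ^ 2) ↔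
      ∃ u v : K, u ^ 2 - a * v ^ 2 = b := by
  constructor
  · rintro ⟨x, y, z, hne, h⟩
    by_cases hy : y = 0
    · subst hy
      have hx : x ≠ 0 := by
        rintro rfl
        have hz : z = 0 := pow_eq_zero_iff two_ne_zero |>.mp (by linear_combination -h)
        exact hne (by rw [hz])
      have hsq : IsSquare a := ⟨z / x, by field_simp; linear_combination h⟩
      exact exists_sq_sub_mul_sq_eq_of_isSquare h2 ha hsq b
    · exact ⟨z / y, x / y, by field_simp; linear_combination -h⟩
  · rintro ⟨u, v, h⟩
    exact ⟨v, 1, u, by simp, by linear_combination -h⟩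

end NormFromQuadraticExtension

namespace QuaternionAlgebra

theorem star_mul_self_re {R : Type*} [CommRing R] {a b : R} (q : ℍ[R, a, b]) :
    (star q * q).re = (q.re ^ 2 - a * q.imI ^ 2) - b * (q.imJ ^ 2 - a * q.imK ^ 2) := by
  simp only [re_mul, re_star, imI_star, imJ_star, imK_star]
  ring

theorem star_mul_self_re_eq_zero_of_det_eq_zero {K n : Type*} [Field K] [Fintype n]
    [DecidableEq n] [Nonempty n] {c₁ c₂ c₃ : K} (f : ℍ[K, c₁, c₂, c₃] →ₐ[K] Matrix n n K)
    {q : ℍ[K, c₁, c₂, c₃]} (hq : (f q).det = 0) : (star q * q).re = 0 := by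
  have hnorm : f (star q * q) = algebraMap K _ (star q * q).re := by
    rw [← f.commutes, coe_algebraMap, ← star_mul_eq_coe]
  have h := congrArg Matrix.det hnorm
  rw [map_mul, Matrix.det_mul, hq, mul_zero] at h
  simpa [Matrix.algebraMap_eq_diagonal, eq_comm] using h

theorem exists_ne_zero_star_mul_self_re_eq_zero {K : Type*} [Field K] {c₁ c₂ c₃ : K}
    (φ : ℍ[K, c₁, c₂, c₃] ≃ₐ[K] Matrix (Fin 2) (Fin 2) K) :
    ∃ q : ℍ[K, c₁, c₂, c₃], q ≠ 0 ∧ (star q * q).re = 0 := by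
  refine ⟨φ.symm !![1, 0; 0, 0], ?_, ?_⟩
  · refine (map_ne_zero_iff _ φ.symm.injective).2 fun h => ?_
    simpa using congrFun (congrFun h 0) 0
  · refine star_mul_self_re_eq_zero_of_det_eq_zero φ.toAlgHom ?_
    simp [Matrix.det_fin_two]

theorem exists_sq_sub_mul_sq_eq_of_star_mul_self_re_eq_zero {K : Type*} [Field K] {a b : K}
    (h2 : (2 : K) ≠ 0) (ha : a ≠ 0) {q : ℍ[K, a, b]} (hq : q ≠ 0) (h : (star q * q).re = 0) :
    ∃ u v : K, u ^ 2 - a * v ^ 2 = b := by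
  rw [star_mul_self_re, sub_eq_zero] at h
  exact exists_sq_sub_mul_sq_eq_of_eq_mul h2 ha h
    fun ⟨hre, himI, himJ, himK⟩ => hq (QuaternionAlgebra.ext hre himI himJ himK)

-- Puts `re q` into the two-sided ideal generated by `q`.
theorem coe_four_mul_mul_re {R : Type*} [CommRing R] {a b : R} (q : ℍ[R, a, b]) :
    ((4 * a * b * q.re : R) : ℍ[R, a, b]) =
      (a * b) • q + b • (⟨0, 1, 0, 0⟩ * q * ⟨0, 1, 0, 0⟩)
        + a • (⟨0, 0, 1, 0⟩ * q * ⟨0, 0, 1, 0⟩) - ⟨0, 0, 0, 1⟩ * q * ⟨0, 0, 0, 1⟩ := by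
  ext <;> simp <;> ring

section Injective

variable {K A : Type*} [Field K] [Ring A] [Algebra K A] [Nontrivial A] {a b : K}

theorem re_eq_zero_of_algHom_apply_eq_zero (h2 : (2 : K) ≠ 0) (ha : a ≠ 0) (hb : b ≠ 0)
    (f : ℍ[K, a, b] →ₐ[K] A) {q : ℍ[K, a, b]} (hq : f q = 0) : q.re = 0 := by
  have h : algebraMap K A (4 * a * b * q.re) = 0 := by
    rw [← f.commutes, coe_algebraMap, coe_four_mul_mul_re]
    simp [hq]
  rw [map_eq_zero_iff _ (algebraMap K A).injective] at h
  have h4 : (4 : K) = 2 * 2 := by norm_num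
  simpa [h4, h2, ha, hb] using h

theorem injective_algHom (h2 : (2 : K) ≠ 0) (ha : a ≠ 0) (hb : b ≠ 0)
    (f : ℍ[K, a, b] →ₐ[K] A) : Function.Injective f := by
  refine (injective_iff_map_eq_zero f).2 fun q hq => ?_
  have hre (e : ℍ[K, a, b]) : (q * e).re = 0 :=
    re_eq_zero_of_algHom_apply_eq_zero h2 ha hb f (by rw [map_mul, hq, zero_mul])
  have hre₁ : q.re = 0 := by simpa using hre 1
  have himI : q.imI = 0 := by simpa [ha] using hre ⟨0, 1, 0, 0⟩
  have himJ : q.imJ = 0 := by simpa [hb] using hre ⟨0, 0, 1, 0⟩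
  have himK : q.imK = 0 := by simpa [ha, hb] using hre ⟨0, 0, 0, 1⟩
  ext <;> simp [hre₁, himI, himJ, himK]

end Injective

section Matrix

variable {K : Type*} [Field K] {a b : K}

def matrixBasis (u v : K) (h : u ^ 2 - a * v ^ 2 = b) :
    Basis (Matrix (Fin 2) (Fin 2) K) a 0 b where
  i := !![0, 1; a, 0]
  j := !![u, v; -(a * v), -u]
  k := !![-(a * v), -u; a * u, a * v]
  i_mul_i := by
    rw [Matrix.mul_fin_two, Matrix.one_fin_two]
    ext i j; fin_cases i <;> fin_cases j <;> simp
  j_mul_j := by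
    rw [Matrix.mul_fin_two, Matrix.one_fin_two, ← h]
    ext i j; fin_cases i <;> fin_cases j <;> simp <;> ring
  i_mul_j := by simp
  j_mul_i := by
    rw [Matrix.mul_fin_two]
    ext i j; fin_cases i <;> fin_cases j <;> simp <;> ring

theorem nonempty_algEquiv_matrix_of_sq_sub_mul_sq_eq (h2 : (2 : K) ≠ 0) (ha : a ≠ 0)
    (hb : b ≠ 0) {u v : K} (h : u ^ 2 - a * v ^ 2 = b) :
    Nonempty (ℍ[K, a, b] ≃ₐ[K] Matrix (Fin 2) (Fin 2) K) := by
  let f := (matrixBasis u v h).liftHom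
  have hinj : Function.Injective f := injective_algHom h2 ha hb f
  have hdim : Module.finrank K ℍ[K, a, b] = Module.finrank K (Matrix (Fin 2) (Fin 2) K) := by
    simp [finrank_eq_four, Module.finrank_matrix]
  have hsurj : Function.Surjective f :=
    (LinearMap.injective_iff_surjective_of_finrank_eq_finrank (f := f.toLinearMap) hdim).1 hinj
  exact ⟨AlgEquiv.ofBijective f ⟨hinj, hsurj⟩⟩

end Matrix

end QuaternionAlgebra

/-- `H_K(a,b)` splits iff the conic `a x² + b y² = z²` has a
nontrivial `K`-rational point. -/
theorem quaternionAlgebra_splits_iff_conic_has_point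
    (K : Type*) [Field K] (hK : ringChar K ≠ 2) (a b : K) (ha : a ≠ 0) (hb : b ≠ 0) :
    Nonempty (ℍ[K, a, b] ≃ₐ[K] Matrix (Fin 2) (Fin 2) K) ↔
      ∃ x y z : K, (x, y, z) ≠ (0, 0, 0) ∧ a * x ^ 2 + b * y ^ 2 = z ^ 2 := by
  have h2 : (2 : K) ≠ 0 := Ring.two_ne_zero hK
  rw [exists_conic_point_iff_exists_sq_sub_mul_sq_eq h2 ha]
  constructor
  · rintro ⟨φ⟩
    obtain ⟨q, hq, hnorm⟩ := QuaternionAlgebra.exists_ne_zero_star_mul_self_re_eq_zero φ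
    exact QuaternionAlgebra.exists_sq_sub_mul_sq_eq_of_star_mul_self_re_eq_zero h2 ha hq hnorm
  · rintro ⟨u, v, h⟩
    exact QuaternionAlgebra.nonempty_algEquiv_matrix_of_sq_sub_mul_sq_eq h2 ha hb h
end

section
/- Let F be a field with char(F) ≠ 2 and a, b ∈ F nonzero. The quaternion algebra H_F(a,b) splits if and only if a is a norm from the extension F(√b)/F. -/
/-!
A split quaternion algebra has nonzero zero divisors, and a zero divisor `q` has reduced norm
`q̄ q = 0`. Thus the norm form `w² − a p² − b r² + a b s²` is isotropic, i.e.
`w² − b r² = a (p² − b s²)` with `(w, p, r, s) ≠ 0`, which writes `a` as a quotient of two norms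
from `F(√b)` unless `b` is a square, in which case every element of `F` is a norm.

Conversely, if `a = x² − b y²`, then `I = [[x, y], [−b y, −x]]` and `J = [[0, 1], [b, 0]]`
satisfy `I² = a`, `J² = b`, `J I = −I J`. The resulting algebra map `H_F(a, b) → M₂(F)` is
injective by a direct computation, hence bijective since both sides have dimension 4.
-/

open Quaternion

section NormForm

variable {F : Type*} [Field F]

theorem exists_eq_sq_sub_mul_sq_of_isSquare (h2 : (2 : F) ≠ 0) {b : F} (hb : b ≠ 0)
    (hsq : IsSquare b) (a : F) : ∃ x y : F, a = x ^ 2 - b * y ^ 2 := by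
  obtain ⟨β, rfl⟩ := hsq
  have hβ : β ≠ 0 := by rintro rfl; simp at hb
  exact ⟨(a + 1) / 2, (a - 1) / (2 * β), by field_simp; ring⟩

theorem eq_zero_of_sq_sub_mul_sq_eq_zero {b x y : F} (hb : ¬IsSquare b)
    (h : x ^ 2 - b * y ^ 2 = 0) : x = 0 ∧ y = 0 := by
  have hy : y = 0 := by
    by_contra hy
    exact hb ⟨x / y, by field_simp; linear_combination -h⟩
  subst hy
  simpa using h

theorem exists_eq_sq_sub_mul_sq_of_isotropic (h2 : (2 : F) ≠ 0) {a b : F} (hb : b ≠ 0)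
    {w p r s : F} (hne : ¬(w = 0 ∧ p = 0 ∧ r = 0 ∧ s = 0))
    (h : w ^ 2 - a * p ^ 2 - b * r ^ 2 + a * b * s ^ 2 = 0) :
    ∃ x y : F, a = x ^ 2 - b * y ^ 2 := by
  by_cases hsq : IsSquare b
  · exact exists_eq_sq_sub_mul_sq_of_isSquare h2 hb hsq a
  have hN : p ^ 2 - b * s ^ 2 ≠ 0 := by
    intro hN
    obtain ⟨hp, hs⟩ := eq_zero_of_sq_sub_mul_sq_eq_zero hsq hN
    subst hp hs
    obtain ⟨hw, hr⟩ := eq_zero_of_sq_sub_mul_sq_eq_zero (x := w) (y := r) hsq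
      (by linear_combination h)
    exact hne ⟨hw, rfl, hr, rfl⟩
  -- `a = N(w + r√b) / N(p + s√b) = N((w + r√b)(p − s√b)) / N(p + s√b)²`
  refine ⟨(w * p - b * r * s) / (p ^ 2 - b * s ^ 2), (p * r - w * s) / (p ^ 2 - b * s ^ 2), ?_⟩
  field_simp
  linear_combination (-(p ^ 2 - b * s ^ 2)) * h

end NormForm

theorem exists_ne_zero_mul_self_eq_zero_of_ringEquiv_matrix {A R n : Type*} [Ring A] [Ring R]
    [Nontrivial R] [Fintype n] [DecidableEq n] [Nontrivial n] (e : A ≃+* Matrix n n R) :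
    ∃ q : A, q ≠ 0 ∧ q * q = 0 := by
  obtain ⟨i, j, hij⟩ := exists_pair_ne n
  refine ⟨e.symm (Matrix.single i j 1), ?_, ?_⟩
  · rw [ne_eq, map_eq_zero_iff _ e.symm.injective]
    intro h
    simpa using congrFun (congrFun h i) j
  · rw [← map_mul, Matrix.single_mul_single_of_ne (h := hij.symm), map_zero]

namespace QuaternionAlgebra

theorem re_star_mul_self {R : Type*} [CommRing R] (c₁ c₃ : R) (q : ℍ[R, c₁, 0, c₃]) :
    (star q * q).re = q.re ^ 2 - c₁ * q.imI ^ 2 - c₃ * q.imJ ^ 2 + c₁ * c₃ * q.imK ^ 2 := by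
  simp only [re_mul, re_star, imI_star, imJ_star, imK_star]
  ring

theorem re_star_mul_self_eq_zero_of_mul_eq_zero {K : Type*} [Field K] {c₁ c₂ c₃ : K}
    {q r : ℍ[K, c₁, c₂, c₃]} (hqr : q * r = 0) (hr : r ≠ 0) : (star q * q).re = 0 := by
  have h : (star q * q).re • r = 0 := by
    rw [← coe_mul_eq_smul, ← star_mul_eq_coe, mul_assoc, hqr, mul_zero]
  exact (smul_eq_zero.mp h).resolve_right hr

theorem exists_eq_sq_sub_mul_sq_of_re_star_mul_self_eq_zero {F : Type*} [Field F]
    (h2 : (2 : F) ≠ 0) {a b : F} (hb : b ≠ 0) {q : ℍ[F, a, b]} (hq : q ≠ 0)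
    (h : (star q * q).re = 0) : ∃ x y : F, a = x ^ 2 - b * y ^ 2 := by
  refine exists_eq_sq_sub_mul_sq_of_isotropic h2 hb (w := q.re) (p := q.imI) (r := q.imJ)
    (s := q.imK) (fun h0 => hq (QuaternionAlgebra.ext h0.1 h0.2.1 h0.2.2.1 h0.2.2.2)) ?_
  rwa [re_star_mul_self] at h

namespace Basis

def matrixOfNorm {R : Type*} [CommRing R] (x y b : R) :
    Basis (Matrix (Fin 2) (Fin 2) R) (x ^ 2 - b * y ^ 2) 0 b where
  i := !![x, y; -(b * y), -x]
  j := !![0, 1; b, 0]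
  k := !![x, y; -(b * y), -x] * !![0, 1; b, 0]
  i_mul_i := by ext i j; fin_cases i <;> fin_cases j <;> simp <;> ring
  j_mul_j := by ext i j; fin_cases i <;> fin_cases j <;> simp
  i_mul_j := rfl
  j_mul_i := by ext i j; fin_cases i <;> fin_cases j <;> simp <;> ring

theorem liftHom_matrixOfNorm_apply {R : Type*} [CommRing R] (x y b : R)
    (q : ℍ[R, x ^ 2 - b * y ^ 2, b]) :
    (matrixOfNorm x y b).liftHom q =
      !![q.re + x * q.imI + b * y * q.imK, y * q.imI + q.imJ + x * q.imK;
        b * (-y * q.imI + q.imJ - x * q.imK), q.re - x * q.imI - b * y * q.imK] := by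
  ext i j
  fin_cases i <;> fin_cases j <;>
    simp [matrixOfNorm, lift, Matrix.algebraMap_matrix_apply] <;> ring

theorem liftHom_matrixOfNorm_injective {F : Type*} [Field F] (h2 : (2 : F) ≠ 0) {x y b : F}
    (ha : x ^ 2 - b * y ^ 2 ≠ 0) (hb : b ≠ 0) :
    Function.Injective (matrixOfNorm x y b).liftHom := by
  rw [injective_iff_map_eq_zero]
  intro q hq
  rw [liftHom_matrixOfNorm_apply, ← Matrix.ext_iff] at hq
  have h00 := by simpa using hq 0 0
  have h01 := by simpa using hq 0 1
  have h10 := by simpa [hb] using hq 1 0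
  have h11 := by simpa using hq 1 1
  have hu : x * q.imI + b * y * q.imK = 0 := mul_left_cancel₀ h2 (by linear_combination h00 - h11)
  have hv : y * q.imI + x * q.imK = 0 := mul_left_cancel₀ h2 (by linear_combination h01 - h10)
  ext <;> simp only [re_zero, imI_zero, imJ_zero, imK_zero]
  · exact mul_left_cancel₀ h2 (by linear_combination h00 + h11)
  · exact mul_left_cancel₀ ha (by linear_combination x * hu - b * y * hv)
  · linear_combination h01 - hv
  · exact mul_left_cancel₀ ha (by linear_combination x * hv - y * hu)

end Basis

end QuaternionAlgebra

/-- `H_F(a,b)` splits iff `a` is a norm from `F(√b)/F`,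
i.e. `a = x² − b y²` for some `x, y ∈ F`. -/
theorem quaternionAlgebra_splits_iff_isNorm
    (F : Type*) [Field F] (hF : ringChar F ≠ 2) (a b : F) (ha : a ≠ 0) (hb : b ≠ 0) :
    Nonempty (ℍ[F, a, b] ≃ₐ[F] Matrix (Fin 2) (Fin 2) F) ↔
      ∃ x y : F, a = x ^ 2 - b * y ^ 2 := by
  have h2 : (2 : F) ≠ 0 := Ring.two_ne_zero hF
  constructor
  · rintro ⟨e⟩
    obtain ⟨q, hq, hqq⟩ := exists_ne_zero_mul_self_eq_zero_of_ringEquiv_matrix e.toRingEquiv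
    exact QuaternionAlgebra.exists_eq_sq_sub_mul_sq_of_re_star_mul_self_eq_zero h2 hb hq
      (QuaternionAlgebra.re_star_mul_self_eq_zero_of_mul_eq_zero hqq hq)
  · rintro ⟨x, y, rfl⟩
    let φ := (QuaternionAlgebra.Basis.matrixOfNorm x y b).liftHom
    have hinj : Function.Injective φ :=
      QuaternionAlgebra.Basis.liftHom_matrixOfNorm_injective h2 ha hb
    have hdim : Module.finrank F ℍ[F, x ^ 2 - b * y ^ 2, b] =
        Module.finrank F (Matrix (Fin 2) (Fin 2) F) := by
      rw [QuaternionAlgebra.finrank_eq_four, Module.finrank_matrix]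
      simp
    have hsurj : Function.Surjective φ :=
      (LinearMap.injective_iff_surjective_of_finrank_eq_finrank (f := φ.toLinearMap) hdim).mp hinj
    exact ⟨AlgEquiv.ofBijective φ ⟨hinj, hsurj⟩⟩
end

section
/- Let p and q be odd primes with p ≡ q ≡ 3 (mod 4) and q not a quadratic residue modulo p. Then the reduced discriminant of the rational quaternion algebra H_ℚ(p,q) equals 2p; in particular, H_ℚ(p,q) is a division algebra. -/
/-!
`H(a, b)` is a division algebra over a field exactly when its reduced norm
`x₀² - a x₁² - b x₂² + ab x₃²` is anisotropic, so everything is decided by this quaternary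
form over the completions `ℚ_v`.

At `v = 2`, a primitive `2`-adic zero would reduce to a zero mod `8` with a unit coordinate,
which a finite check excludes when `p ≡ q ≡ 3 (mod 4)`. At `v = p`, the form reads
`x² - r y² - p (z² - r w²)` with `r = q` a nonsquare mod `p` (or, when `q = p`, after
`H(p, p) ≅ H(p, -1)`, with `r = -1`); reducing mod `p` twice shows that all coordinates of a
zero are divisible by `p`, so there is no primitive zero. At every other prime `v`, the equation
`p T² + q S² = 1` is solvable mod `v` (by counting if `v ≠ q`, by quadratic reciprocity if
`v = q`) and lifts by Hensel's lemma, so `1 + T i + S j` is a nonzero element of norm `0`.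
Finally `H(p, q)` itself is a division algebra because it already is one over `ℚ₂`.
-/

open Quaternion

/-- The rational quaternion algebra `H_ℚ(a,b)` ramifies at the rational prime `v`
if its base change to `ℚ_v` is a division algebra. -/
def RatQuatRamifiedAt (a b : ℚ) (v : ℕ) [Fact v.Prime] : Prop :=
  ∀ x : ℍ[ℚ_[v], (a : ℚ_[v]), (b : ℚ_[v])], x ≠ 0 → IsUnit x

section NormForm

variable {K : Type*} [Field K]

def QuaternionNormAnisotropic (c₁ c₂ : K) : Prop :=
  ∀ a b c d : K, a ^ 2 - c₁ * b ^ 2 - c₂ * c ^ 2 + c₁ * c₂ * d ^ 2 = 0 →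
    a = 0 ∧ b = 0 ∧ c = 0 ∧ d = 0

variable {c₁ c₂ : K}

theorem QuaternionAlgebra.star_mul_eq_coe_normForm (x : ℍ[K,c₁,c₂]) :
    star x * x =
      ((x.re ^ 2 - c₁ * x.imI ^ 2 - c₂ * x.imJ ^ 2 + c₁ * c₂ * x.imK ^ 2 : K) : ℍ[K,c₁,c₂]) := by
  rw [QuaternionAlgebra.star_mul_eq_coe]
  congr 1
  simp only [QuaternionAlgebra.re_mul, QuaternionAlgebra.re_star, QuaternionAlgebra.imI_star,
    QuaternionAlgebra.imJ_star, QuaternionAlgebra.imK_star]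
  ring

theorem QuaternionAlgebra.forall_isUnit_iff :
    (∀ x : ℍ[K,c₁,c₂], x ≠ 0 → IsUnit x) ↔ QuaternionNormAnisotropic c₁ c₂ := by
  constructor
  · intro h a b c d hN
    by_contra hne
    set x : ℍ[K,c₁,c₂] := ⟨a, b, c, d⟩
    have hx : x ≠ 0 := fun hx ↦ hne (by simp_all [x, QuaternionAlgebra.ext_iff])
    have hstar : star x * x = 0 * x := by
      rw [QuaternionAlgebra.star_mul_eq_coe_normForm, zero_mul]
      change ((a ^ 2 - c₁ * b ^ 2 - c₂ * c ^ 2 + c₁ * c₂ * d ^ 2 : K) : ℍ[K,c₁,c₂]) = 0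
      rw [hN, QuaternionAlgebra.coe_zero]
    exact hx (star_eq_zero.mp ((h x hx).mul_right_cancel hstar))
  · intro h x hx
    set N := x.re ^ 2 - c₁ * x.imI ^ 2 - c₂ * x.imJ ^ 2 + c₁ * c₂ * x.imK ^ 2
    have hN : N ≠ 0 := fun hN ↦ hx <| by
      obtain ⟨h1, h2, h3, h4⟩ := h _ _ _ _ hN
      ext <;> assumption
    have hmul : star x * x = (N : ℍ[K,c₁,c₂]) := QuaternionAlgebra.star_mul_eq_coe_normForm x
    refine ⟨⟨x, N⁻¹ • star x, ?_, ?_⟩, rfl⟩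
    · rw [mul_smul_comm, ← star_comm_self', hmul, QuaternionAlgebra.smul_coe, inv_mul_cancel₀ hN,
        QuaternionAlgebra.coe_one]
    · rw [smul_mul_assoc, hmul, QuaternionAlgebra.smul_coe, inv_mul_cancel₀ hN,
        QuaternionAlgebra.coe_one]

theorem QuaternionNormAnisotropic.swap (h : QuaternionNormAnisotropic c₁ c₂) :
    QuaternionNormAnisotropic c₂ c₁ := fun a b c d hN ↦ by
  obtain ⟨ha, hc, hb, hd⟩ := h a c b d (by linear_combination hN)
  exact ⟨ha, hb, hc, hd⟩

-- `H(a, b) ≅ H(a, -ab)`, seen on the norm forms.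
theorem QuaternionNormAnisotropic.neg_mul_right (hc₁ : c₁ ≠ 0)
    (h : QuaternionNormAnisotropic c₁ c₂) : QuaternionNormAnisotropic c₁ (-(c₁ * c₂)) :=
  fun a b c d hN ↦ by
    obtain ⟨ha, hb, hd, hc⟩ := h a b (c₁ * d) c (by linear_combination hN)
    exact ⟨ha, hb, hc, (mul_eq_zero.mp hd).resolve_left hc₁⟩

theorem QuaternionNormAnisotropic.of_map {L : Type*} [Field L] (f : K →+* L)
    (h : QuaternionNormAnisotropic (f c₁) (f c₂)) : QuaternionNormAnisotropic c₁ c₂ :=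
  fun a b c d hN ↦ by
    simpa using h (f a) (f b) (f c) (f d) (by simpa using congrArg f hN)

theorem not_quaternionNormAnisotropic_of_mul_sq_add_mul_sq_eq_one {t s : K}
    (h : c₁ * t ^ 2 + c₂ * s ^ 2 = 1) : ¬ QuaternionNormAnisotropic c₁ c₂ := fun hN ↦
  one_ne_zero (hN 1 t s 0 (by linear_combination -h)).1

end NormForm

theorem eq_zero_and_eq_zero_of_sq_sub_mul_sq_eq_zero_s5 {F : Type*} [Field F] {r x y : F}
    (hr : ¬IsSquare r) (h : x ^ 2 - r * y ^ 2 = 0) : x = 0 ∧ y = 0 := by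
  have hy : y = 0 := by
    by_contra hy
    exact hr ⟨x / y, by field_simp; linear_combination -h⟩
  subst hy
  exact ⟨pow_eq_zero_iff two_ne_zero |>.mp (by simpa using h), rfl⟩

theorem FiniteField.exists_mul_sq_add_mul_sq_eq_one {F : Type*} [Field F] [Fintype F]
    (hF : Fintype.card F % 2 = 1) {a b : F} (ha : a ≠ 0) (hb : b ≠ 0) :
    ∃ x y : F, a * x ^ 2 + b * y ^ 2 = 1 := by
  open Polynomial in
  obtain ⟨x, y, h⟩ := FiniteField.exists_root_sum_quadratic
    (f := C a * X ^ 2 + C 0 * X + C (-1)) (g := C b * X ^ 2 + C 0 * X + C 0)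
    (degree_quadratic ha) (degree_quadratic hb) hF
  simp only [eval_add, eval_mul, eval_C, eval_pow, eval_X, zero_mul, add_zero] at h
  exact ⟨x, y, by linear_combination h⟩

namespace PadicInt

variable {l : ℕ} [Fact l.Prime]

theorem toZMod_eq_zero_iff_dvd (x : ℤ_[l]) : toZMod x = 0 ↔ (l : ℤ_[l]) ∣ x := by
  rw [← RingHom.mem_ker, ker_toZMod, maximalIdeal_eq_span_p, Ideal.mem_span_singleton]

theorem isUnit_iff_not_dvd (x : ℤ_[l]) : IsUnit x ↔ ¬(l : ℤ_[l]) ∣ x := by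
  rw [isUnit_iff, ← norm_lt_one_iff_dvd, not_lt]
  exact ⟨ge_of_eq, (norm_le_one x).antisymm⟩

theorem isUnit_iff_toZMod_ne_zero (x : ℤ_[l]) : IsUnit x ↔ toZMod x ≠ 0 := by
  rw [Ne, toZMod_eq_zero_iff_dvd, isUnit_iff_not_dvd]

theorem exists_primitive_zero_of_not_quaternionNormAnisotropic {c₁ c₂ : ℤ_[l]}
    (h : ¬QuaternionNormAnisotropic (c₁ : ℚ_[l]) (c₂ : ℚ_[l])) :
    ∃ A B C D : ℤ_[l], A ^ 2 - c₁ * B ^ 2 - c₂ * C ^ 2 + c₁ * c₂ * D ^ 2 = 0 ∧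
      (IsUnit A ∨ IsUnit B ∨ IsUnit C ∨ IsUnit D) := by
  classical
  simp only [QuaternionNormAnisotropic, not_forall] at h
  obtain ⟨a, b, c, d, hN, hne⟩ := h
  obtain ⟨m, hm, hmax⟩ := Finset.exists_max_image {a, b, c, d} (‖·‖) (by simp)
  simp only [Finset.mem_insert, Finset.mem_singleton, forall_eq_or_imp, forall_eq] at hm hmax
  have hm0 : m ≠ 0 := by
    rintro rfl
    simp_all
  have hint (y : ℚ_[l]) (hy : ‖y‖ ≤ ‖m‖) : ‖m⁻¹ * y‖ ≤ 1 := by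
    rw [norm_mul, norm_inv]
    exact inv_mul_le_one_of_le₀ hy (norm_nonneg _)
  let scale (y : ℚ_[l]) (hy : ‖y‖ ≤ ‖m‖) : ℤ_[l] := ⟨m⁻¹ * y, hint y hy⟩
  have hscale (y : ℚ_[l]) (hy : ‖y‖ ≤ ‖m‖) : (scale y hy : ℚ_[l]) = m⁻¹ * y := rfl
  refine ⟨scale a hmax.1, scale b hmax.2.1, scale c hmax.2.2.1, scale d hmax.2.2.2, ?_, ?_⟩
  · refine coe_eq_zero.mp ?_
    push_cast [hscale]
    linear_combination (m⁻¹) ^ 2 * hN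
  · have hunit : IsUnit (scale m le_rfl) := isUnit_iff.2 (by simp [norm_def, hscale, hm0])
    rcases hm with rfl | rfl | rfl | rfl <;> simp only [hunit, true_or, or_true]

theorem dvd_and_dvd_of_dvd_sq_sub_mul_sq {r x y : ℤ_[l]} (hr : ¬IsSquare (toZMod r))
    (h : (l : ℤ_[l]) ∣ x ^ 2 - r * y ^ 2) : (l : ℤ_[l]) ∣ x ∧ (l : ℤ_[l]) ∣ y := by
  simp only [← toZMod_eq_zero_iff_dvd, map_sub, map_mul, map_pow] at h ⊢
  exact eq_zero_and_eq_zero_of_sq_sub_mul_sq_eq_zero_s5 hr h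

theorem dvd_of_sq_sub_mul_sq_eq_mul {r x y z w : ℤ_[l]} (hr : ¬IsSquare (toZMod r))
    (h : x ^ 2 - r * y ^ 2 = l * (z ^ 2 - r * w ^ 2)) :
    (l : ℤ_[l]) ∣ x ∧ (l : ℤ_[l]) ∣ y ∧ (l : ℤ_[l]) ∣ z ∧ (l : ℤ_[l]) ∣ w := by
  obtain ⟨⟨x, rfl⟩, ⟨y, rfl⟩⟩ := dvd_and_dvd_of_dvd_sq_sub_mul_sq hr (h ▸ dvd_mul_right _ _)
  have hl : (l : ℤ_[l]) ≠ 0 := Nat.cast_ne_zero.2 (Fact.out : l.Prime).ne_zero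
  have h' : z ^ 2 - r * w ^ 2 = l * (x ^ 2 - r * y ^ 2) :=
    mul_left_cancel₀ hl (by linear_combination -h)
  obtain ⟨hz, hw⟩ := dvd_and_dvd_of_dvd_sq_sub_mul_sq hr (h' ▸ dvd_mul_right _ _)
  exact ⟨dvd_mul_right _ _, dvd_mul_right _ _, hz, hw⟩

theorem quaternionNormAnisotropic_of_not_isSquare {r : ℤ_[l]} (hr : ¬IsSquare (toZMod r)) :
    QuaternionNormAnisotropic (l : ℚ_[l]) (r : ℚ_[l]) := by
  by_contra h
  obtain ⟨A, B, C, D, hN, hunit⟩ :=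
    exists_primitive_zero_of_not_quaternionNormAnisotropic (c₁ := (l : ℤ_[l])) (by simpa using h)
  obtain ⟨hA, hC, hB, hD⟩ :=
    dvd_of_sq_sub_mul_sq_eq_mul hr (x := A) (y := C) (z := B) (w := D) (by linear_combination hN)
  simp only [isUnit_iff_not_dvd, hA, hB, hC, hD, not_true_eq_false, or_self] at hunit

theorem isSquare_of_isSquare_toZMod (hl : l ≠ 2) {u : ℤ_[l]} (hu : IsUnit u)
    (h : IsSquare (toZMod u)) : IsSquare u := by
  obtain ⟨s, hs⟩ := h
  obtain ⟨t, rfl⟩ := ZMod.ringHom_surjective toZMod s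
  have ht : ‖t‖ = 1 := by
    rw [← isUnit_iff, isUnit_iff_toZMod_ne_zero]
    rintro h0
    rw [isUnit_iff_toZMod_ne_zero, hs, h0, mul_zero] at hu
    exact hu rfl
  have h2 : ‖(2 : ℤ_[l])‖ = 1 := by
    rw [← isUnit_iff, isUnit_iff_toZMod_ne_zero, map_ofNat]
    exact_mod_cast ZMod.prime_ne_zero l 2 hl
  have hsmall : ‖t ^ 2 - u‖ < 1 := by
    rw [norm_lt_one_iff_dvd, ← toZMod_eq_zero_iff_dvd, map_sub, map_pow, hs, sq, sub_self]
  obtain ⟨z, hz, -⟩ := hensels_lemma (F := Polynomial.X ^ 2 - Polynomial.C u) (a := t)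
    (by simpa [norm_mul, one_add_one_eq_two, h2, ht] using hsmall)
  exact ⟨z, by simp at hz; linear_combination -hz⟩

theorem not_quaternionNormAnisotropic_of_toZMod (hl : l ≠ 2) {a b : ℤ_[l]} (ha : IsUnit a)
    {γ δ : ZMod l} (hγ : γ ≠ 0) (h : toZMod a * γ ^ 2 + toZMod b * δ ^ 2 = 1) :
    ¬QuaternionNormAnisotropic (a : ℚ_[l]) (b : ℚ_[l]) := by
  obtain ⟨S, rfl⟩ := ZMod.ringHom_surjective toZMod δ
  obtain ⟨u, hu⟩ : a ∣ 1 - b * S ^ 2 := ha.dvd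
  have hu' : toZMod u = γ ^ 2 := by
    refine mul_left_cancel₀ ((isUnit_iff_toZMod_ne_zero a).1 ha) ?_
    rw [← map_mul, ← hu, map_sub, map_one, map_mul, map_pow]
    linear_combination -h
  obtain ⟨T, rfl⟩ := isSquare_of_isSquare_toZMod hl
    ((isUnit_iff_toZMod_ne_zero u).2 (by rw [hu']; exact pow_ne_zero 2 hγ)) ⟨γ, by rw [hu', sq]⟩
  refine not_quaternionNormAnisotropic_of_mul_sq_add_mul_sq_eq_one (t := (T : ℚ_[l]))
    (s := (S : ℚ_[l])) ?_
  have hTS : a * T ^ 2 + b * S ^ 2 = 1 := by linear_combination -hu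
  simpa using congrArg ((↑) : ℤ_[l] → ℚ_[l]) hTS

end PadicInt

theorem ZMod.sq_sub_mul_sq_sub_mul_sq_add_mul_sq_ne_zero {P Q : ZMod 8}
    (hP : P ∈ ({3, 7} : Finset (ZMod 8))) (hQ : Q ∈ ({3, 7} : Finset (ZMod 8)))
    {A B C D : ZMod 8} (h : IsUnit A ∨ IsUnit B ∨ IsUnit C ∨ IsUnit D) :
    A ^ 2 - P * B ^ 2 - Q * C ^ 2 + P * Q * D ^ 2 ≠ 0 := by
  have hsq : ∀ x : ZMod 8, x ^ 2 ∈ ({0, 1, 4} : Finset (ZMod 8)) := by decide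
  have hunit (x : ZMod 8) (hx : IsUnit x) : x ^ 2 = 1 := by
    obtain ⟨u, rfl⟩ := hx
    revert u
    decide
  have key : ∀ P ∈ ({3, 7} : Finset (ZMod 8)), ∀ Q ∈ ({3, 7} : Finset (ZMod 8)),
      ∀ a ∈ ({0, 1, 4} : Finset (ZMod 8)), ∀ b ∈ ({0, 1, 4} : Finset (ZMod 8)),
      ∀ c ∈ ({0, 1, 4} : Finset (ZMod 8)), ∀ d ∈ ({0, 1, 4} : Finset (ZMod 8)),
      (a = 1 ∨ b = 1 ∨ c = 1 ∨ d = 1) → a - P * b - Q * c + P * Q * d ≠ 0 := by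
    decide
  exact key P hP Q hQ _ (hsq A) _ (hsq B) _ (hsq C) _ (hsq D)
    (h.imp (hunit A) (Or.imp (hunit B) (Or.imp (hunit C) (hunit D))))

theorem ZMod.natCast_mem_of_mod_four_eq_three {n : ℕ} (hn : n % 4 = 3) :
    (n : ZMod 8) ∈ ({3, 7} : Finset (ZMod 8)) := by
  rw [← ZMod.natCast_mod n 8]
  rcases (by omega : n % 8 = 3 ∨ n % 8 = 7) with h | h <;> simp [h]

theorem quaternionNormAnisotropic_two {p q : ℕ} (hp : p % 4 = 3) (hq : q % 4 = 3) :
    QuaternionNormAnisotropic (p : ℚ_[2]) (q : ℚ_[2]) := by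
  by_contra h
  obtain ⟨A, B, C, D, hN, hunit⟩ :=
    PadicInt.exists_primitive_zero_of_not_quaternionNormAnisotropic (c₁ := (p : ℤ_[2]))
      (c₂ := q) (by simpa using h)
  let f : ℤ_[2] →+* ZMod 8 := PadicInt.toZModPow 3
  refine ZMod.sq_sub_mul_sq_sub_mul_sq_add_mul_sq_ne_zero
    (ZMod.natCast_mem_of_mod_four_eq_three hp) (ZMod.natCast_mem_of_mod_four_eq_three hq)
    (hunit.imp (·.map f) (Or.imp (·.map f) (Or.imp (·.map f) (·.map f)))) ?_
  simpa using congrArg f hN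

theorem quaternionNormAnisotropic_of_legendreSym_ne_one {p q : ℕ} [Fact p.Prime]
    [Fact q.Prime] (hp4 : p % 4 = 3) (hres : legendreSym p q ≠ 1) :
    QuaternionNormAnisotropic (p : ℚ_[p]) (q : ℚ_[p]) := by
  rcases eq_or_ne p q with rfl | hpq
  · have h := PadicInt.quaternionNormAnisotropic_of_not_isSquare (l := p) (r := -1)
      (by simpa [ZMod.exists_sq_eq_neg_one_iff] using hp4)
    simpa using h.neg_mul_right (by simpa using (Fact.out : p.Prime).ne_zero)
  · have hq : ¬IsSquare (PadicInt.toZMod (q : ℤ_[p])) := by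
      rw [map_natCast]
      exact mt (legendreSym.eq_one_iff' p (ZMod.prime_ne_zero p q hpq)).2 hres
    simpa using PadicInt.quaternionNormAnisotropic_of_not_isSquare hq

theorem not_quaternionNormAnisotropic_of_ne_two_of_ne {p q v : ℕ} [Fact p.Prime] [Fact q.Prime]
    [Fact v.Prime] (hp4 : p % 4 = 3) (hq4 : q % 4 = 3) (hres : legendreSym p q ≠ 1)
    (hv2 : v ≠ 2) (hvp : v ≠ p) : ¬QuaternionNormAnisotropic (p : ℚ_[v]) (q : ℚ_[v]) := by
  have hunit {n : ℕ} (hn : (n : ZMod v) ≠ 0) : IsUnit (n : ℤ_[v]) := by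
    rwa [PadicInt.isUnit_iff_toZMod_ne_zero, map_natCast]
  have hp := hunit (ZMod.prime_ne_zero v p hvp)
  rcases eq_or_ne v q with rfl | hvq
  · obtain ⟨s, hs⟩ : IsSquare (p : ZMod v) := by
      by_contra hns
      exact mt (legendreSym.eq_one_iff' p (ZMod.prime_ne_zero p v hvp.symm)).2 hres
        ((ZMod.exists_sq_eq_prime_iff_of_mod_four_eq_three hp4 hq4 hvp.symm).2 hns)
    have hs0 : s ≠ 0 := by
      rintro rfl
      exact ZMod.prime_ne_zero v p hvp (by simpa using hs)
    simpa using PadicInt.not_quaternionNormAnisotropic_of_toZMod hv2 hp (b := v)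
      (δ := 0) (inv_ne_zero hs0)
      (by rw [map_natCast, hs, zero_pow two_ne_zero, mul_zero, add_zero]; field_simp)
  · obtain ⟨γ, δ, h⟩ := FiniteField.exists_mul_sq_add_mul_sq_eq_one
      (by rw [ZMod.card]; exact Nat.odd_iff.1 ((Fact.out : v.Prime).odd_of_ne_two hv2))
      (ZMod.prime_ne_zero v p hvp) (ZMod.prime_ne_zero v q hvq)
    rcases eq_or_ne γ 0 with rfl | hγ
    · have hδ : δ ≠ 0 := by
        rintro rfl
        simp at h
      intro hN
      refine PadicInt.not_quaternionNormAnisotropic_of_toZMod hv2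
        (hunit (ZMod.prime_ne_zero v q hvq)) (b := p) (δ := 0) hδ (by simpa using h) ?_
      simpa using hN.swap
    · simpa using PadicInt.not_quaternionNormAnisotropic_of_toZMod hv2 hp (b := q) hγ
        (by simpa using h)

/-- for odd primes `p ≡ q ≡ 3 (mod 4)` with `q` not a quadratic residue
mod `p`, the reduced discriminant of `H_ℚ(p,q)` is `2p` (the ramified primes are
exactly `2` and `p`); in particular `H_ℚ(p,q)` is a division algebra. -/
theorem discriminant_eq_two_mul_p_of_three_mod_four
    (p q : ℕ) [Fact p.Prime] [Fact q.Prime] (hp4 : p % 4 = 3) (hq4 : q % 4 = 3)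
    (hres : legendreSym p q ≠ 1) :
    (∀ (v : ℕ) [Fact v.Prime],
        (RatQuatRamifiedAt (p : ℚ) (q : ℚ) v ↔ v = 2 ∨ v = p)) ∧
      ∀ x : ℍ[ℚ, (p : ℚ), (q : ℚ)], x ≠ 0 → IsUnit x := by
  have h2 := quaternionNormAnisotropic_two hp4 hq4
  refine ⟨fun v _ ↦ ?_, ?_⟩
  · rw [RatQuatRamifiedAt, QuaternionAlgebra.forall_isUnit_iff, Rat.cast_natCast,
      Rat.cast_natCast]
    refine ⟨fun h ↦ ?_, ?_⟩
    · by_contra hv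
      obtain ⟨hv2, hvp⟩ := not_or.1 hv
      exact not_quaternionNormAnisotropic_of_ne_two_of_ne hp4 hq4 hres hv2 hvp h
    · rintro (rfl | rfl)
      exacts [h2, quaternionNormAnisotropic_of_legendreSym_ne_one hp4 hres]
  · rw [QuaternionAlgebra.forall_isUnit_iff]
    exact QuaternionNormAnisotropic.of_map (Rat.castHom ℚ_[2]) (by simpa using h2)
end
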